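/- arXiv:2501.07673 — 4 statements merged into one kernel-verified Lean document; each statement's English description precedes it below -/
import Mathlib

section
/- Let X be an arithmetic L-space. The following are equivalent: (i) Y_d is an antichain; (ii) max Y = Y_d; (iii) Y_d, topologized so that its open sets are exactly the traces U ∩ Y_d of clopen upsets U of X, is a locally Stone space (zero-dimensional, locally compact, and Hausdorff). -/
open Set Topology

variable {X : Type*} [TopologicalSpace X] [PartialOrder X]

/-- The downward closure `↓A` of a subset of a poset. -/
def dwC (A : Set X) : Set X := {x : X | ∃ a ∈ A, x ≤ a}

/-- The upward closure `↑A` of a subset of a poset. -/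
def upC (A : Set X) : Set X := {x : X | ∃ a ∈ A, a ≤ x}

/-- The set of maximal points of a subset of a poset. -/
def maxOf (A : Set X) : Set X := {x ∈ A | ∀ z ∈ A, x ≤ z → z = x}

/-- The set of minimal points of a subset of a poset. -/
def minOf (A : Set X) : Set X := {x ∈ A | ∀ z ∈ A, z ≤ x → z = x}

/-- A Priestley space: compact with the Priestley separation axiom. -/
def IsPriestley (X : Type*) [TopologicalSpace X] [PartialOrder X] : Prop :=
  CompactSpace X ∧
    ∀ x y : X, ¬x ≤ y → ∃ U : Set X, IsClopen U ∧ IsUpperSet U ∧ x ∈ U ∧ y ∉ U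

/-- An L-space: a Priestley space where the closure of every open upset is an open upset. -/
def IsLSpace (X : Type*) [TopologicalSpace X] [PartialOrder X] : Prop :=
  IsPriestley X ∧
    ∀ U : Set X, IsOpen U → IsUpperSet U → IsOpen (closure U) ∧ IsUpperSet (closure U)

/-- The set `Y` of localic points: those `y` with `↓y` clopen. -/
def localicPts (X : Type*) [TopologicalSpace X] [PartialOrder X] : Set X :=
  {y : X | IsClopen (dwC ({y} : Set X))}

/-- A Scott upset: a closed upset whose minimal points are localic. -/
def IsScottUp (F : Set X) : Prop :=
  IsClosed F ∧ IsUpperSet F ∧ minOf F ⊆ localicPts X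

/-- The collection of clopen Scott upsets of `X`. -/
def ClopSUp (X : Type*) [TopologicalSpace X] [PartialOrder X] : Set (Set X) :=
  {U : Set X | IsClopen U ∧ IsScottUp U}

/-- The core of a clopen upset: the union of the clopen Scott upsets inside it. -/
def coreC (U : Set X) : Set X := ⋃₀ {V : Set X | V ∈ ClopSUp X ∧ V ⊆ U}

/-- An algebraic L-space: the core of each clopen upset is dense in it. -/
def IsAlgebraicLSpace (X : Type*) [TopologicalSpace X] [PartialOrder X] : Prop :=
  IsLSpace X ∧ ∀ U : Set X, IsClopen U → IsUpperSet U → U ⊆ closure (coreC U)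

/-- An arithmetic L-space: an algebraic L-space in which the intersection of any
two clopen Scott upsets is again a Scott upset. -/
def IsArithmeticLSpace (X : Type*) [TopologicalSpace X] [PartialOrder X] : Prop :=
  IsAlgebraicLSpace X ∧
    ∀ U V : Set X, U ∈ ClopSUp X → V ∈ ClopSUp X → IsScottUp (U ∩ V)

/-- A nuclear subset of an L-space. -/
def IsNuclearSub (N : Set X) : Prop :=
  IsClosed N ∧ ∀ U : Set X, IsClopen U → IsClopen (dwC (U ∩ N))

/-- The nucleus `j_N` associated to a nuclear subset: `j_N U = X \ ↓(N \ U)`. -/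
def jN (N U : Set X) : Set X := (dwC (N \ U))ᶜ

/-- A nuclear subset is inductive if `↑(F ∩ N)` is a Scott upset for every Scott upset `F`. -/
def IsInductiveNuclear (N : Set X) : Prop :=
  ∀ F : Set X, IsScottUp F → IsScottUp (upC (F ∩ N))

/-- The pseudocomplement `V* = X \ ↓V`. -/
def starC (V : Set X) : Set X := (dwC V)ᶜ

/-- The `d`-nucleus on clopen upsets: `d U = cl ⋃ {V** : V ∈ ClopSUp X, V ⊆ U}`. -/
def dOp (U : Set X) : Set X :=
  closure (⋃₀ {W : Set X | ∃ V ∈ ClopSUp X, V ⊆ U ∧ W = starC (starC V)})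

/-- The `d`-core: `core_d U = ⋃ {d V : V ∈ ClopSUp X, V ⊆ U}`. -/
def coreD (U : Set X) : Set X :=
  ⋃₀ {W : Set X | ∃ V ∈ ClopSUp X, V ⊆ U ∧ W = dOp V}

/-- The topology on a subset `S ⊆ X` whose opens are (generated by) the traces of
clopen upsets of `X`. -/
def traceTop (S : Set X) : TopologicalSpace S :=
  TopologicalSpace.generateFrom
    {V : Set S | ∃ U : Set X, IsClopen U ∧ IsUpperSet U ∧ V = Subtype.val ⁻¹' U}

/-!
The heart of the proof: if `C` is a down-directed family of clopen Scott upsets, the minimal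
points of `⋂₀ C ∩ N_d` are localic. Otherwise such an `m` lies in the clopen upset
`A = cl (X \ ↓m)`, the closure of the directed union of the clopen upsets `D` missing `m`.
Clopen Scott upsets are compact elements, so for `W ∈ C` an inclusion `N ∩ W ⊆ A` would give
`W ⊆ j_N A = d A` and then `W ⊆ d D = j_N D` for one such `D`; as `m ∈ N ∩ W`, this forces
`m ∈ D`. Hence the closed sets `(N ∩ W) \ A` are nonempty, and by compactness they share a
point, which lies below `m` without being `m`.

So `Y_d` is cofinal in `Y`, and below every point of `N ∩ W` (`W` a clopen Scott upset) lies a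
point of `Y_d ∩ W`. The first fact gives (i) ⇔ (ii). The second makes the traces of clopen Scott
upsets compact open subsets of `Y_d`; by algebraicity they form a basis, and when `Y_d` is an
antichain the traces of `W` and `X \ ↓(W ∩ N)` separate points. Conversely, trace-open sets are
upsets, so a Hausdorff `Y_d` is an antichain.
-/

omit [TopologicalSpace X] in
lemma dwC_singleton (y : X) : dwC {y} = Iic y := by
  ext; simp [dwC]

omit [TopologicalSpace X] in
lemma isLowerSet_dwC (A : Set X) : IsLowerSet (dwC A) := (lowerClosure A).lower

omit [TopologicalSpace X] in
lemma isAntichain_maxOf (A : Set X) : IsAntichain (· ≤ ·) (maxOf A) :=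
  fun _ ha _ hb hab hle => hab (ha.2 _ hb.1 hle).symm

instance PriestleySpace.toOrderClosedTopology [PriestleySpace X] : OrderClosedTopology X where
  isClosed_le' := by
    refine isOpen_compl_iff.1 (isOpen_iff_forall_mem_open.2 fun p hp => ?_)
    obtain ⟨U, hU, hUup, hp₁, hp₂⟩ := exists_isClopen_upper_of_not_le hp
    exact ⟨U ×ˢ Uᶜ, fun q hq hle => hq.2 (hUup hle hq.1), hU.isOpen.prod hU.compl.isOpen,
      hp₁, hp₂⟩

lemma IsPriestley.compactSpace (hP : IsPriestley X) : CompactSpace X := hP.1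

lemma IsPriestley.priestleySpace (hP : IsPriestley X) : PriestleySpace X := ⟨hP.2 _ _⟩

lemma isClosed_dwC [CompactSpace X] [OrderClosedTopology X] {C : Set X} (hC : IsClosed C) :
    IsClosed (dwC C) := by
  have : dwC C = Prod.fst '' {p : X × X | p.1 ≤ p.2 ∧ p.2 ∈ C} := by
    ext x; simp [dwC, and_comm]
  rw [this]
  exact isClosedMap_fst_of_compactSpace _
    ((isClosed_le continuous_fst continuous_snd).inter (hC.preimage continuous_snd))

lemma exists_mem_minOf_le [CompactSpace X] [ClosedIicTopology X] {C : Set X} (hC : IsClosed C)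
    {x : X} (hx : x ∈ C) : ∃ m ∈ minOf C, m ≤ x := by
  have chain_bdd :
      ∀ c ⊆ C, IsChain (· ≥ ·) c → ∀ y ∈ c, ∃ lb ∈ C, ∀ z ∈ c, lb ≤ z := by
    intro c hcC hc y hy
    have : Nonempty c := ⟨⟨y, hy⟩⟩
    obtain ⟨lb, hlb⟩ := IsCompact.nonempty_iInter_of_directed_nonempty_isCompact_isClosed
      (fun z : c => C ∩ Iic z.1)
      (hc.directedOn.directed_val.mono_comp _ (g := fun z => C ∩ Iic z)
        fun _ _ hab => inter_subset_inter_right C (Iic_subset_Iic.2 hab))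
      (fun z => ⟨_, hcC z.2, le_rfl⟩) (fun z => (hC.inter isClosed_Iic).isCompact)
      (fun z => hC.inter isClosed_Iic)
    rw [mem_iInter] at hlb
    exact ⟨lb, (hlb ⟨y, hy⟩).1, fun z hz => (hlb ⟨z, hz⟩).2⟩
  obtain ⟨m, hmx, hmC, hm⟩ := zorn_le_nonempty₀ (α := Xᵒᵈ) C chain_bdd x hx
  exact ⟨m, ⟨hmC, fun z hzC hzm => (hm hzC hzm).antisymm hzm⟩, hmx⟩

lemma sUnion_isClopen_isUpperSet_notMem [PriestleySpace X] (m : X) :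
    ⋃₀ {D : Set X | IsClopen D ∧ IsUpperSet D ∧ m ∉ D} = (Iic m)ᶜ := by
  ext x
  constructor
  · rintro ⟨D, ⟨-, hD, hmD⟩, hxD⟩ hxm
    exact hmD (hD hxm hxD)
  · intro hx
    obtain ⟨U, hU, hUup, hxU, hmU⟩ := exists_isClopen_upper_of_not_le hx
    exact ⟨U, ⟨hU, hUup, hmU⟩, hxU⟩

lemma IsScottUp.subset_of_subset_closure [CompactSpace X] [ClosedIicTopology X] {F U : Set X}
    (hF : IsScottUp F) (hU : IsUpperSet U) (h : F ⊆ closure U) : F ⊆ U := by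
  intro w hw
  obtain ⟨y, hy, hyw⟩ := exists_mem_minOf_le hF.1 hw
  have hIic : IsOpen (Iic y) := by
    simpa only [localicPts, mem_ofPred_eq, dwC_singleton] using (hF.2.2 hy).isOpen
  obtain ⟨z, hzy, hzU⟩ := mem_closure_iff.1 (h hy.1) _ hIic self_mem_Iic
  exact hU hyw (hU hzy hzU)

lemma IsScottUp.exists_subset_of_subset_closure_sUnion [CompactSpace X] [ClosedIicTopology X]
    {F : Set X} {G : Set (Set X)} (hF : IsScottUp F) (hGne : G.Nonempty)
    (hGdir : DirectedOn (· ⊆ ·) G) (hGopen : ∀ A ∈ G, IsOpen A)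
    (hGup : ∀ A ∈ G, IsUpperSet A) (h : F ⊆ closure (⋃₀ G)) : ∃ A ∈ G, F ⊆ A := by
  have hFG : F ⊆ ⋃ A : G, A.1 := by
    rw [← sUnion_eq_iUnion]
    exact hF.subset_of_subset_closure (isUpperSet_sUnion hGup) h
  have : Nonempty G := hGne.to_subtype
  obtain ⟨⟨A, hA⟩, hFA⟩ := hF.1.isCompact.elim_directed_cover _ (fun A => hGopen _ A.2) hFG
    hGdir.directed_val
  exact ⟨A, hA, hFA⟩

omit [TopologicalSpace X] in
lemma subset_jN_of_inter_subset {N U W : Set X} (hW : IsUpperSet W) (h : N ∩ W ⊆ U) :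
    W ⊆ jN N U := by
  rintro x hx ⟨n, ⟨hnN, hnU⟩, hxn⟩
  exact hnU (h ⟨hnN, hW hxn hx⟩)

omit [TopologicalSpace X] in
lemma mem_of_mem_jN {N U : Set X} {x : X} (hx : x ∈ N) (h : x ∈ jN N U) : x ∈ U :=
  by_contra fun hxU => h ⟨x, ⟨hx, hxU⟩, le_rfl⟩

omit [TopologicalSpace X] in
lemma isUpperSet_jN (N U : Set X) : IsUpperSet (jN N U) := (isLowerSet_dwC _).compl

lemma isOpen_jN [CompactSpace X] [OrderClosedTopology X] {N U : Set X} (hN : IsClosed N)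
    (hU : IsOpen U) : IsOpen (jN N U) :=
  (isClosed_dwC (hN.sdiff hU)).isOpen_compl

lemma dOp_mono {U V : Set X} (h : U ⊆ V) : dOp U ⊆ dOp V :=
  closure_mono <| sUnion_subset_sUnion fun _ ⟨W, hW, hWU, hW'⟩ => ⟨W, hW, hWU.trans h, hW'⟩

lemma dOp_empty : dOp (∅ : Set X) = ∅ := by
  rw [dOp, closure_empty_iff, sUnion_eq_empty]
  rintro _ ⟨V, -, hV, rfl⟩
  rw [subset_empty_iff.1 hV, starC, starC, compl_empty_iff]
  exact eq_univ_of_forall fun x => ⟨x, fun ⟨_, h, _⟩ => h, le_rfl⟩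

lemma dOp_subset_closure_sUnion_image [CompactSpace X] [ClosedIicTopology X] {U : Set X}
    {G : Set (Set X)} (hGne : G.Nonempty) (hGdir : DirectedOn (· ⊆ ·) G)
    (hGopen : ∀ A ∈ G, IsOpen A) (hGup : ∀ A ∈ G, IsUpperSet A)
    (hU : U ⊆ closure (⋃₀ G)) :
    dOp U ⊆ closure (⋃₀ (dOp '' G)) := by
  refine closure_minimal ?_ isClosed_closure
  rintro x ⟨_, ⟨V, hV, hVU, rfl⟩, hx⟩
  obtain ⟨A, hA, hVA⟩ :=
    hV.2.exists_subset_of_subset_closure_sUnion hGne hGdir hGopen hGup (hVU.trans hU)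
  exact subset_closure
    ⟨dOp A, mem_image_of_mem _ hA, subset_closure ⟨_, ⟨V, hV, hVA, rfl⟩, hx⟩⟩

lemma mem_closure_compl_Iic_of_notMem_localicPts (hL : IsLSpace X) {m : X}
    (hm : m ∉ localicPts X) : m ∈ closure (Iic m)ᶜ := by
  have := hL.1.compactSpace
  have := hL.1.priestleySpace
  by_contra hmA
  have hup := (hL.2 _ isClosed_Iic.isOpen_compl (isLowerSet_Iic m).compl).2
  have hA : closure (Iic m)ᶜ = (Iic m)ᶜ :=
    subset_antisymm (fun z hz hzm => hmA (hup hzm hz)) subset_closure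
  refine hm ?_
  rw [localicPts, mem_ofPred_eq, dwC_singleton]
  exact ⟨isClosed_Iic, isClosed_compl_iff.1 (hA ▸ isClosed_closure)⟩

lemma exists_mem_clopSUp_subset (hX : IsAlgebraicLSpace X) {y : X} (hy : y ∈ localicPts X)
    {U : Set X} (hU : IsClopen U) (hU' : IsUpperSet U) (hyU : y ∈ U) :
    ∃ W ∈ ClopSUp X, y ∈ W ∧ W ⊆ U := by
  rw [localicPts, mem_ofPred_eq, dwC_singleton] at hy
  obtain ⟨z, hzy, W, ⟨hW, hWU⟩, hzW⟩ :=
    mem_closure_iff.1 (hX.2 U hU hU' hyU) _ hy.isOpen self_mem_Iic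
  exact ⟨W, hW, hW.2.2.1 hzy hzW, hWU⟩

lemma le_of_forall_mem_clopSUp (hX : IsAlgebraicLSpace X) {y z : X} (hy : y ∈ localicPts X)
    (h : ∀ W ∈ ClopSUp X, y ∈ W → z ∈ W) : y ≤ z := by
  by_contra hyz
  obtain ⟨U, hU, hUup, hyU, hzU⟩ := hX.1.1.2 y z hyz
  obtain ⟨W, hW, hyW, hWU⟩ := exists_mem_clopSUp_subset hX hy hU hUup hyU
  exact hzU (hWU (h W hW hyW))

lemma isTopologicalBasis_traceTop (S : Set X) :
    @TopologicalSpace.IsTopologicalBasis S (traceTop S)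
      {V | ∃ U : Set X, IsClopen U ∧ IsUpperSet U ∧ V = Subtype.val ⁻¹' U} :=
  @TopologicalSpace.isTopologicalBasis_of_subbasis_of_finiteInter _ (traceTop S) _ rfl
    ⟨⟨univ, isClopen_univ, isUpperSet_univ, rfl⟩,
      fun _ ⟨U, hU, hUup, hVU⟩ _ ⟨U', hU', hU'up, hVU'⟩ =>
        ⟨U ∩ U', hU.inter hU', hUup.inter hU'up, by rw [hVU, hVU', preimage_inter]⟩⟩

lemma isOpen_traceTop_preimage (S : Set X) {U : Set X} (hU : IsClopen U) (hU' : IsUpperSet U) :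
    IsOpen[traceTop S] (Subtype.val ⁻¹' U) :=
  TopologicalSpace.isOpen_generateFrom_of_mem ⟨U, hU, hU', rfl⟩

lemma IsOpen.isUpperSet_of_traceTop {S : Set X} {O : Set S} (hO : IsOpen[traceTop S] O) :
    IsUpperSet O := by
  let _ := traceTop S
  intro a b hab ha
  obtain ⟨_, ⟨U, -, hUup, rfl⟩, haU, hUO⟩ :=
    (isTopologicalBasis_traceTop S).exists_subset_of_mem_open ha hO
  exact hUO (hUup hab haU)

lemma isAntichain_of_t2Space_traceTop {S : Set X} (h : @T2Space S (traceTop S)) :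
    IsAntichain (· ≤ ·) S := by
  let _ := traceTop S
  intro a ha b hb hne hab
  obtain ⟨u, v, hu, hv, hau, hbv, huv⟩ :=
    t2_separation (x := (⟨a, ha⟩ : S)) (y := ⟨b, hb⟩) (by simpa using hne)
  have hab' : (⟨a, ha⟩ : S) ≤ ⟨b, hb⟩ := hab
  exact disjoint_left.1 huv (hu.isUpperSet_of_traceTop hab' hau) hbv

section NuclearSubset

variable {N : Set X} (hN : IsClosed N)
  (hNd : ∀ U : Set X, IsClopen U → IsUpperSet U → jN N U = dOp U)
include hN hNd

lemma not_inter_subset_closure_compl_Iic (hL : IsLSpace X) {W : Set X} (hW : IsScottUp W)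
    {m : X} (hmW : m ∈ W) (hmN : m ∈ N) : ¬ N ∩ W ⊆ closure (Iic m)ᶜ := by
  have := hL.1.compactSpace
  have := hL.1.priestleySpace
  intro h
  set G : Set (Set X) := {D | IsClopen D ∧ IsUpperSet D ∧ m ∉ D}
  have hGne : G.Nonempty := ⟨∅, isClopen_empty, isUpperSet_empty, notMem_empty m⟩
  have hGdir : DirectedOn (· ⊆ ·) G := fun D hD E hE =>
    ⟨D ∪ E, ⟨hD.1.union hE.1, hD.2.1.union hE.2.1, by simp [hD.2.2, hE.2.2]⟩,
      subset_union_left, subset_union_right⟩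
  have hdOp : ∀ D ∈ G, dOp D = jN N D := fun D hD => (hNd D hD.1 hD.2.1).symm
  have hA := hL.2 _ isClosed_Iic.isOpen_compl (isLowerSet_Iic m).compl
  have hWG : W ⊆ closure (⋃₀ (dOp '' G)) :=
    calc W ⊆ jN N (closure (Iic m)ᶜ) := subset_jN_of_inter_subset hW.2.1 h
      _ = dOp (closure (Iic m)ᶜ) := hNd _ ⟨isClosed_closure, hA.1⟩ hA.2
      _ ⊆ closure (⋃₀ (dOp '' G)) :=
        dOp_subset_closure_sUnion_image hGne hGdir (fun D hD => hD.1.isOpen)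
          (fun D hD => hD.2.1) (by rw [sUnion_isClopen_isUpperSet_notMem])
  have hdir' : DirectedOn (· ⊆ ·) (dOp '' G) := hGdir.mono_comp fun _ _ => dOp_mono
  have hopen : ∀ A ∈ dOp '' G, IsOpen A := by
    rintro _ ⟨D, hD, rfl⟩; exact hdOp D hD ▸ isOpen_jN hN hD.1.isOpen
  have hup : ∀ A ∈ dOp '' G, IsUpperSet A := by
    rintro _ ⟨D, hD, rfl⟩; exact hdOp D hD ▸ isUpperSet_jN N D
  obtain ⟨_, ⟨D, hD, rfl⟩, hWD⟩ := hW.exists_subset_of_subset_closure_sUnion (hGne.image _)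
    hdir' hopen hup hWG
  rw [hdOp D hD] at hWD
  exact hD.2.2 (mem_of_mem_jN hmN (hWD hmW))

lemma mem_localicPts_of_mem_minOf (hL : IsLSpace X) {C : Set (Set X)} (hC : C ⊆ ClopSUp X)
    (hCne : C.Nonempty) (hCdir : DirectedOn (· ⊇ ·) C) {m : X}
    (hm : m ∈ minOf (⋂₀ C ∩ N)) :
    m ∈ localicPts X := by
  have := hL.1.compactSpace
  have := hL.1.priestleySpace
  by_contra hmY
  have hA := hL.2 _ isClosed_Iic.isOpen_compl (isLowerSet_Iic m).compl
  have : Nonempty C := hCne.to_subtype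
  obtain ⟨z, hz⟩ := IsCompact.nonempty_iInter_of_directed_nonempty_isCompact_isClosed
    (fun W : C => (N ∩ W.1) \ closure (Iic m)ᶜ)
    (hCdir.directed_val.mono_comp _ (g := fun W => (N ∩ W) \ closure (Iic m)ᶜ)
      fun _ _ h => sdiff_subset_sdiff_left (inter_subset_inter_right N h))
    (fun W => nonempty_of_not_subset <| not_inter_subset_closure_compl_Iic hN hNd hL
      (hC W.2).2 (hm.1.1 W W.2) hm.1.2)
    (fun W => ((hN.inter (hC W.2).1.isClosed).sdiff hA.1).isCompact)
    (fun W => (hN.inter (hC W.2).1.isClosed).sdiff hA.1)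
  simp only [mem_iInter, Subtype.forall] at hz
  obtain ⟨W₀, hW₀⟩ := hCne
  have hzm : z ≤ m := by_contra fun h => (hz W₀ hW₀).2 (subset_closure h)
  have hzC : z ∈ ⋂₀ C ∩ N := ⟨fun W hW => (hz W hW).1.2, (hz W₀ hW₀).1.1⟩
  obtain rfl : z = m := hm.2 z hzC hzm
  exact (hz W₀ hW₀).2 (mem_closure_compl_Iic_of_notMem_localicPts hL hmY)

lemma exists_mem_localicPts_le (hL : IsLSpace X) {C : Set (Set X)} (hC : C ⊆ ClopSUp X)
    (hCne : C.Nonempty) (hCdir : DirectedOn (· ⊇ ·) C) {x : X} (hx : x ∈ ⋂₀ C ∩ N) :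
    ∃ m ∈ ⋂₀ C ∩ N, m ∈ localicPts X ∧ m ≤ x := by
  have := hL.1.compactSpace
  have := hL.1.priestleySpace
  obtain ⟨m, hm, hmx⟩ :=
    exists_mem_minOf_le ((isClosed_sInter fun W hW => (hC hW).1.isClosed).inter hN) hx
  exact ⟨m, hm.1, mem_localicPts_of_mem_minOf hN hNd hL hC hCne hCdir hm, hmx⟩

lemma exists_mem_localicPts_between (hX : IsArithmeticLSpace X) {t n : X} {W : Set X}
    (ht : t ∈ localicPts X) (hW : W ∈ ClopSUp X) (hn : n ∈ W ∩ N) (htn : t ≤ n) :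
    ∃ m ∈ N ∩ localicPts X, t ≤ m ∧ m ∈ W := by
  set S : Set (Set X) := {V | V ∈ ClopSUp X ∧ t ∈ V}
  have hSdir : DirectedOn (· ⊇ ·) S := fun V hV V' hV' =>
    ⟨V ∩ V', ⟨⟨hV.1.1.inter hV'.1.1, hX.2 V V' hV.1 hV'.1⟩, hV.2, hV'.2⟩,
      inter_subset_left, inter_subset_right⟩
  obtain ⟨V₀, hV₀, htV₀, -⟩ :=
    exists_mem_clopSUp_subset hX.1 ht isClopen_univ isUpperSet_univ (mem_univ t)
  have hC : (· ∩ W) '' S ⊆ ClopSUp X := by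
    rintro _ ⟨V, ⟨hV, -⟩, rfl⟩
    exact ⟨hV.1.inter hW.1, hX.2 V W hV hW⟩
  have hnC : n ∈ ⋂₀ ((· ∩ W) '' S) ∩ N := by
    refine ⟨?_, hn.2⟩
    rintro _ ⟨V, ⟨hV, htV⟩, rfl⟩
    exact ⟨hV.2.2.1 htn htV, hn.1⟩
  obtain ⟨m, ⟨hmC, hmN⟩, hmY, -⟩ := exists_mem_localicPts_le hN hNd hX.1.1 hC
    ⟨_, V₀, ⟨hV₀, htV₀⟩, rfl⟩ (hSdir.mono_comp fun _ _ h => inter_subset_inter_left W h)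
    hnC
  exact ⟨m, ⟨hmN, hmY⟩,
    le_of_forall_mem_clopSUp hX.1 ht fun V hV htV => (hmC _ ⟨V, ⟨hV, htV⟩, rfl⟩).1,
    (hmC _ ⟨V₀, ⟨hV₀, htV₀⟩, rfl⟩).2⟩

lemma exists_mem_localicPts_ge (hX : IsArithmeticLSpace X) {y : X} (hy : y ∈ localicPts X) :
    ∃ s ∈ N ∩ localicPts X, y ≤ s := by
  have hNX : dwC N = univ := by
    simpa [jN, dOp_empty] using hNd ∅ isClopen_empty isUpperSet_empty
  obtain ⟨n, hn, hyn⟩ : y ∈ dwC N := hNX ▸ mem_univ y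
  obtain ⟨V, hV, hyV, -⟩ :=
    exists_mem_clopSUp_subset hX.1 hy isClopen_univ isUpperSet_univ (mem_univ y)
  obtain ⟨s, hs, hys, -⟩ :=
    exists_mem_localicPts_between hN hNd hX hy hV ⟨hV.2.2.1 hyn hyV, hn⟩ hyn
  exact ⟨s, hs, hys⟩

lemma maxOf_localicPts_eq_of_isAntichain (hX : IsArithmeticLSpace X)
    (h : IsAntichain (· ≤ ·) (N ∩ localicPts X)) :
    maxOf (localicPts X) = N ∩ localicPts X := by
  ext y
  constructor
  · rintro ⟨hyY, hymax⟩
    obtain ⟨s, hs, hys⟩ := exists_mem_localicPts_ge hN hNd hX hyY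
    exact hymax s hs.2 hys ▸ hs
  · refine fun hy => ⟨hy.2, fun z hzY hyz => ?_⟩
    obtain ⟨t, ht, hzt⟩ := exists_mem_localicPts_ge hN hNd hX hzY
    exact le_antisymm (h.eq hy ht (hyz.trans hzt) ▸ hzt) hyz

lemma isCompact_traceTop_preimage (hX : IsArithmeticLSpace X) {W : Set X}
    (hW : W ∈ ClopSUp X) :
    @IsCompact _ (traceTop (N ∩ localicPts X)) (Subtype.val ⁻¹' W) := by
  let _ := traceTop (N ∩ localicPts X)
  have := hX.1.1.1.compactSpace
  refine isCompact_generateFrom rfl fun P hP hcover => ?_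
  have hP' : ∀ V ∈ P, ∃ U : Set X, IsClopen U ∧ IsUpperSet U ∧ V = Subtype.val ⁻¹' U :=
    fun V hV => hP hV
  choose! U hU using hP'
  have hWN : W ∩ N ⊆ ⋃ V ∈ P, U V := by
    intro x hx
    obtain ⟨s, ⟨hsW, hsN⟩, hsY, hsx⟩ := exists_mem_localicPts_le hN hNd hX.1.1 (C := {W})
      (singleton_subset_iff.2 hW) (singleton_nonempty W) (directedOn_singleton W)
      (by rwa [sInter_singleton])
    have hs : (⟨s, mem_inter hsN hsY⟩ : ↥(N ∩ localicPts X)) ∈ Subtype.val ⁻¹' W := hsW _ rfl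
    obtain ⟨V, hVP, hsV⟩ := hcover hs
    rw [(hU V hVP).2.2] at hsV
    exact mem_biUnion hVP ((hU V hVP).2.1 hsx hsV)
  obtain ⟨Q, hQP, hQfin, hWQ⟩ :=
    (hW.2.1.inter hN).isCompact.elim_finite_subcover_image (fun V hV => (hU V hV).1.isOpen) hWN
  refine ⟨Q, hQP, hQfin, fun p hp => ?_⟩
  obtain ⟨V, hVQ, hpV⟩ := mem_iUnion₂.1 (hWQ ⟨hp, p.2.1⟩)
  exact ⟨V, hVQ, by rw [(hU V (hQP hVQ)).2.2]; exact hpV⟩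

lemma exists_isCompact_isOpen_traceTop_subset (hX : IsArithmeticLSpace X)
    {O : Set ↥(N ∩ localicPts X)} (hO : IsOpen[traceTop (N ∩ localicPts X)] O)
    {p : ↥(N ∩ localicPts X)} (hp : p ∈ O) :
    ∃ K, @IsCompact _ (traceTop (N ∩ localicPts X)) K ∧
      IsOpen[traceTop (N ∩ localicPts X)] K ∧ p ∈ K ∧ K ⊆ O := by
  let _ := traceTop (N ∩ localicPts X)
  obtain ⟨_, ⟨U, hU, hUup, rfl⟩, hpU, hUO⟩ :=
    (isTopologicalBasis_traceTop _).exists_subset_of_mem_open hp hO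
  obtain ⟨W, hW, hpW, hWU⟩ := exists_mem_clopSUp_subset hX.1 p.2.2 hU hUup hpU
  exact ⟨_, isCompact_traceTop_preimage hN hNd hX hW,
    isOpen_traceTop_preimage _ hW.1 hW.2.2.1, hpW, (preimage_mono hWU).trans hUO⟩

end NuclearSubset

lemma t2Space_traceTop {N : Set X} (hX : IsArithmeticLSpace X) (hN : IsNuclearSub N)
    (hNd : ∀ U : Set X, IsClopen U → IsUpperSet U → jN N U = dOp U)
    (h : IsAntichain (· ≤ ·) (N ∩ localicPts X)) :
    @T2Space _ (traceTop (N ∩ localicPts X)) := by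
  let _ := traceTop (N ∩ localicPts X)
  refine ⟨fun p q hpq => ?_⟩
  have hq : IsClopen (Iic (q : X)) := by
    simpa only [localicPts, mem_ofPred_eq, dwC_singleton] using q.2.2
  obtain ⟨W, hW, hpW, hWq⟩ := exists_mem_clopSUp_subset hX.1 p.2.2 hq.compl
    (isLowerSet_Iic _).compl (h p.2 q.2 (Subtype.val_injective.ne hpq))
  have hqW : (q : X) ∉ dwC (W ∩ N) := by
    rintro ⟨n, hn, hqn⟩
    obtain ⟨m, hm, hqm, hmW⟩ := exists_mem_localicPts_between hN.1 hNd hX q.2.2 hW hn hqn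
    exact hWq (h.eq q.2 hm hqm ▸ hmW) le_rfl
  refine ⟨_, _, isOpen_traceTop_preimage _ hW.1 hW.2.2.1,
    isOpen_traceTop_preimage _ (hN.2 W hW.1).compl (isLowerSet_dwC _).compl, hpW, hqW,
    disjoint_left.2 fun x hxW hx => hx ⟨x, ⟨hxW, x.2.1⟩, le_rfl⟩⟩

/-- Let `X` be an arithmetic L-space and `N = N_d` the nuclear subset
whose nucleus `j_N` is the `d`-nucleus, with `Y_d = N_d ∩ Y`. TFAE:
(i) `Y_d` is an antichain;
(ii) `max Y = Y_d`;
(iii) `Y_d`, topologized so that its open sets are exactly the traces of the clopen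
upsets of `X`, is a locally Stone space (zero-dimensional, locally compact, Hausdorff). -/
theorem statement13 (hX : IsArithmeticLSpace X)
    (N : Set X) (hN : IsNuclearSub N)
    (hNd : ∀ U : Set X, IsClopen U → IsUpperSet U → jN N U = dOp U) :
    List.TFAE
      [IsAntichain (· ≤ ·) (N ∩ localicPts X),
       maxOf (localicPts X) = N ∩ localicPts X,
       (@TopologicalSpace.IsTopologicalBasis _ (traceTop (N ∩ localicPts X))
          {s : Set ↥(N ∩ localicPts X) | @IsClopen _ (traceTop (N ∩ localicPts X)) s} ∧
        @LocallyCompactSpace _ (traceTop (N ∩ localicPts X)) ∧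
        @T2Space _ (traceTop (N ∩ localicPts X)))] := by
  tfae_have 1 → 2 := maxOf_localicPts_eq_of_isAntichain hN.1 hNd hX
  tfae_have 2 → 1 := fun h => h ▸ isAntichain_maxOf _
  tfae_have 3 → 1 := fun h => isAntichain_of_t2Space_traceTop h.2.2
  tfae_have 1 → 3 := by
    intro h
    let _ := traceTop (N ∩ localicPts X)
    have := t2Space_traceTop hX hN hNd h
    refine ⟨TopologicalSpace.isTopologicalBasis_of_isOpen_of_nhds (fun u hu => hu.isOpen)
      fun p O hp hO => ?_, ⟨fun p O hO => ?_⟩, this⟩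
    · obtain ⟨K, hK, hKo, hpK, hKO⟩ := exists_isCompact_isOpen_traceTop_subset hN.1 hNd hX hO hp
      exact ⟨K, ⟨hK.isClosed, hKo⟩, hpK, hKO⟩
    · obtain ⟨O', hO'O, hO', hpO'⟩ := mem_nhds_iff.1 hO
      obtain ⟨K, hK, hKo, hpK, hKO'⟩ :=
        exists_isCompact_isOpen_traceTop_subset hN.1 hNd hX hO' hpO'
      exact ⟨K, hKo.mem_nhds hpK, hKO'.trans hO'O, hK⟩
  tfae_finish
end

section
/- Let X be an arithmetic L-space. Then min Y_d, topologized so that its open sets are exactly the traces U ∩ min Y_d of clopen upsets U of X, is a T1 space. -/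
open Set Topology

variable {X : Type*} [TopologicalSpace X] [PartialOrder X]

/-- Let `X` be an arithmetic L-space and `N = N_d` the nuclear subset
whose nucleus `j_N` is the `d`-nucleus, with `Y_d = N_d ∩ Y`. Then `min Y_d`, topologized
so that its open sets are exactly the traces of clopen upsets of `X`, is a T1 space. -/
theorem statement16 (hX : IsArithmeticLSpace X)
    (N : Set X) (hN : IsNuclearSub N)
    (hNd : ∀ U : Set X, IsClopen U → IsUpperSet U → jN N U = dOp U) :
    @T1Space _ (traceTop (minOf (N ∩ localicPts X))) := by
  letI : TopologicalSpace (minOf (N ∩ localicPts X)) := traceTop _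
  rw [t1Space_iff_exists_open]
  rintro x y hxy
  have hsep := hX.1.1.1.2
  have hle : ¬ (x : X) ≤ (y : X) := fun h =>
    hxy (Subtype.ext (y.2.2 x x.2.1 h))
  obtain ⟨U, hUc, hUu, hxU, hyU⟩ := hsep x y hle
  exact ⟨Subtype.val ⁻¹' U,
    TopologicalSpace.isOpen_generateFrom_of_mem ⟨U, hUc, hUu, rfl⟩, hxU, hyU⟩
end

section
/- Let X be an arithmetic L-space and K ⊆ min Y_d. The following are equivalent: (1) K is compact in the topology on min Y_d whose open sets are the traces of clopen upsets of X; (2) ↑K is a d-initial Scott upset of X; (3) K = F ∩ min Y_d for some d-initial Scott upset F of X. -/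
open Set Topology

variable {X : Type*} [TopologicalSpace X] [PartialOrder X]

/-- In a compact space where `↓c` is closed for points, every point of a closed set
lies above a minimal point of the set. -/
theorem st17_min_below [CompactSpace X]
    (sep : ∀ x y : X, ¬x ≤ y → ∃ U : Set X, IsClopen U ∧ IsUpperSet U ∧ x ∈ U ∧ y ∉ U)
    {F : Set X} (hFc : IsClosed F) {x : X} (hx : x ∈ F) :
    ∃ m ∈ minOf F, m ≤ x := by
  have hdw : ∀ c : X, IsClosed {z : X | z ≤ c} := by
    intro c
    rw [← isOpen_compl_iff]
    rw [isOpen_iff_forall_mem_open]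
    intro z hz
    obtain ⟨U, hUc, hUu, hzU, hcU⟩ := sep z c hz
    exact ⟨U, fun w hw hwc => hcU (hUu hwc hw), hUc.2, hzU⟩
  set s : Set X := {z | z ∈ F ∧ z ≤ x} with hs
  have hzorn := zorn_le_nonempty₀ (α := Xᵒᵈ) s ?_ x ⟨hx, le_rfl⟩
  · obtain ⟨m, hxm, hm⟩ := hzorn
    refine ⟨m, ⟨hm.1.1, ?_⟩, hm.1.2⟩
    intro z hzF hzm
    exact le_antisymm hzm (hm.2 (y := z) ⟨hzF, le_trans hzm hm.1.2⟩ hzm)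
  · intro c hcs hc y hy
    have htn : ∀ i : {z : X // z ∈ c}, (F ∩ {w : X | w ≤ (i : X)}).Nonempty := by
      intro ⟨z, hz⟩
      exact ⟨z, (hcs hz).1, le_rfl⟩
    have hmono : ∀ a b : X, a ≤ b → F ∩ {w : X | w ≤ a} ⊆ F ∩ {w : X | w ≤ b} :=
      fun a b hab w hw => ⟨hw.1, le_trans hw.2 hab⟩
    haveI : Nonempty {z : X // z ∈ c} := ⟨⟨y, hy⟩⟩
    obtain ⟨b, hb⟩ := IsCompact.nonempty_iInter_of_directed_nonempty_isCompact_isClosed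
      (fun i : {z : X // z ∈ c} => F ∩ {w : X | w ≤ (i : X)})
      (fun i j => by
        rcases hc.total i.2 j.2 with h | h
        · exact ⟨j, hmono _ _ (show (j : X) ≤ i from h), Subset.rfl⟩
        · exact ⟨i, Subset.rfl, hmono _ _ (show (i : X) ≤ j from h)⟩)
      htn
      (fun i => (hFc.inter (hdw _)).isCompact)
      (fun i => hFc.inter (hdw _))
    simp only [mem_iInter, mem_inter_iff] at hb
    refine ⟨b, ⟨(hb ⟨y, hy⟩).1, le_trans (hb ⟨y, hy⟩).2 (hcs hy).2⟩, ?_⟩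
    intro z hz
    exact (hb ⟨z, hz⟩).2


/-- Let `X` be an arithmetic L-space, `N = N_d` the nuclear subset
whose nucleus `j_N` is the `d`-nucleus, `Y_d = N_d ∩ Y`, and `K ⊆ min Y_d`. TFAE:
(1) `K` is compact in the topology on `min Y_d` whose opens are the traces of clopen
upsets of `X`;
(2) `↑K` is a `d`-initial Scott upset of `X`;
(3) `K = F ∩ min Y_d` for some `d`-initial Scott upset `F` of `X`.
(Here `Z` is `d`-initial if `Z ∩ Y ⊆ ↑(Z ∩ min Y_d)`.) -/

theorem statement17 (hX : IsArithmeticLSpace X)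
    (N : Set X) (hN : IsNuclearSub N)
    (hNd : ∀ U : Set X, IsClopen U → IsUpperSet U → jN N U = dOp U)
    (K : Set X) (hK : K ⊆ minOf (N ∩ localicPts X)) :
    List.TFAE
      [@IsCompact _ (traceTop (minOf (N ∩ localicPts X))) (Subtype.val ⁻¹' K),
       IsScottUp (upC K) ∧
         upC K ∩ localicPts X ⊆ upC (upC K ∩ minOf (N ∩ localicPts X)),
       ∃ F : Set X, IsScottUp F ∧
         F ∩ localicPts X ⊆ upC (F ∩ minOf (N ∩ localicPts X)) ∧
         K = F ∩ minOf (N ∩ localicPts X)] := by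
  classical
  haveI : CompactSpace X := hX.1.1.1.1
  have sep := hX.1.1.1.2
  set M : Set X := minOf (N ∩ localicPts X) with hM
  tfae_have 1 → 2 := by
    intro h1
    letI : TopologicalSpace M := traceTop M
    have hup : IsUpperSet (upC K) := fun y z hyz hy => by
      obtain ⟨a, haK, hay⟩ := hy
      exact ⟨a, haK, hay.trans hyz⟩
    refine ⟨⟨?_, hup, ?_⟩, ?_⟩
    · -- `upC K` is closed
      rw [← isOpen_compl_iff, isOpen_iff_forall_mem_open]
      intro x hx
      have hax : ∀ a : {a : X // a ∈ K}, ¬(a : X) ≤ x := fun a ha => hx ⟨a, a.2, ha⟩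
      choose U hUc hUu hmem hnx using fun a : {a : X // a ∈ K} => sep a x (hax a)
      have hopen : ∀ a : {a : X // a ∈ K}, IsOpen (Subtype.val ⁻¹' (U a) : Set M) :=
        fun a => TopologicalSpace.isOpen_generateFrom_of_mem ⟨U a, hUc a, hUu a, rfl⟩
      have hcov : (Subtype.val ⁻¹' K : Set M) ⊆ ⋃ a, Subtype.val ⁻¹' (U a) := by
        rintro ⟨m, hmM⟩ hm
        exact mem_iUnion.2 ⟨⟨m, hm⟩, hmem _⟩
      obtain ⟨t, ht⟩ := h1.elim_finite_subcover _ hopen hcov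
      refine ⟨(⋃ a ∈ t, U a)ᶜ, ?_, ?_, ?_⟩
      · intro z hz hzup
        apply hz
        obtain ⟨a, haK, haz⟩ := hzup
        have : (⟨a, hK haK⟩ : M) ∈ ⋃ i ∈ t, (Subtype.val ⁻¹' (U i) : Set M) :=
          ht (show a ∈ K from haK)
        obtain ⟨i, hit, hai⟩ := mem_iUnion₂.1 this
        exact mem_iUnion₂.2 ⟨i, hit, hUu i haz hai⟩
      · exact (t.finite_toSet.isClosed_biUnion fun a _ => (hUc a).1).isOpen_compl
      · intro hxmem
        obtain ⟨i, _, hxi⟩ := mem_iUnion₂.1 hxmem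
        exact hnx i hxi
    · -- minimal points of `upC K` are localic
      rintro m ⟨⟨a, haK, ham⟩, hmin⟩
      have : a = m := hmin a ⟨a, haK, le_rfl⟩ ham
      subst this
      exact (hK haK).1.2
    · -- d-initiality
      rintro y ⟨⟨a, haK, hay⟩, -⟩
      exact ⟨a, ⟨⟨a, haK, le_rfl⟩, hK haK⟩, hay⟩
  tfae_have 2 → 3 := by
    intro h2
    refine ⟨upC K, h2.1, h2.2, ?_⟩
    ext x
    constructor
    · intro hx
      exact ⟨⟨x, hx, le_rfl⟩, hK hx⟩
    · rintro ⟨⟨a, haK, hax⟩, hxM⟩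
      have : a = x := hxM.2 a (hK haK).1 hax
      rwa [← this]
  tfae_have 3 → 1 := by
    rintro ⟨F, ⟨hFc, hFu, hFmin⟩, hFinit, hKF⟩
    letI : TopologicalSpace M := traceTop M
    rw [isCompact_iff_ultrafilter_le_nhds]
    intro f hf
    have hKf : (Subtype.val ⁻¹' K : Set M) ∈ f := Filter.le_principal_iff.mp hf
    set g : Ultrafilter X := f.map Subtype.val with hg
    obtain ⟨x, -, hgx⟩ := isCompact_univ.ultrafilter_le_nhds g (by simp)
    have hKg : K ∈ g := Ultrafilter.mem_map.2 hKf
    have hxF : x ∈ F := by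
      have hxcl : x ∈ closure K := by
        rw [mem_closure_iff_nhds]
        intro t ht
        exact Ultrafilter.nonempty_of_mem (f := g) (Filter.inter_mem (hgx ht) hKg)
      exact closure_minimal (by rw [hKF]; exact inter_subset_left) hFc hxcl
    obtain ⟨m, hmF, hmx⟩ := st17_min_below sep hFc hxF
    have hmY := hFmin hmF
    obtain ⟨k, hkFM, hkm⟩ := hFinit ⟨hmF.1, hmY⟩
    have hkK : k ∈ K := by rw [hKF]; exact hkFM
    refine ⟨⟨k, hkFM.2⟩, hkK, ?_⟩
    show ↑f ≤ @nhds _ (TopologicalSpace.generateFrom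
      {V : Set M | ∃ U : Set X, IsClopen U ∧ IsUpperSet U ∧ V = Subtype.val ⁻¹' U}) _
    rw [TopologicalSpace.nhds_generateFrom]
    refine le_iInf₂ fun s hs => ?_
    obtain ⟨hks, U, hUc, hUu, rfl⟩ := hs
    rw [Filter.le_principal_iff]
    have hxU : x ∈ U := hUu (hkm.trans hmx) hks
    exact Ultrafilter.mem_map.1 (hgx (hUc.2.mem_nhds hxU))
  tfae_finish
end

section
/- There exists an arithmetic L-space X such that min Y_d, topologized so that its open sets are exactly the traces U ∩ min Y_d of clopen upsets U of X, is not Hausdorff. (Consequently, there exists an arithmetic frame whose maximal d-spectrum is not Hausdorff.) -/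
open Set Topology

variable {X : Type*} [TopologicalSpace X] [PartialOrder X]

/-!
The example is `E = (ℕ ∪ {∞}) ⊕ β(ℕ × ℕ)`. In the bottom layer the points of `ℕ` form an antichain
below `∞`; an ultrafilter lies directly above `n` if it contains the row `{n} × ℕ`, and above the
whole bottom layer if it contains no row. The bottom points and the principal ultrafilters are
localic, the free ultrafilters are not, and every bottom point has a free ultrafilter directly above
it. Hence every clopen Scott upset `V` satisfies `V** = V`, the nucleus `d` is the identity on
clopen upsets, `N_d = E` and `min Y_d = ℕ`. A clopen upset containing some `n` contains `∞`, hence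
a tail of `ℕ`, so the sequence `0, 1, 2, …` converges to every point of `min Y_d` in the trace
topology. The L-space property comes from `β(ℕ × ℕ)` being extremally disconnected.
-/

open Filter Function OnePoint

section Poset

variable {P : Type*} [PartialOrder P]

lemma subset_dwC (A : Set P) : A ⊆ dwC A := fun a ha => ⟨a, ha, le_rfl⟩

lemma compl_dwC_compl {U : Set P} (hU : IsUpperSet U) : (dwC Uᶜ)ᶜ = U := by
  ext x
  refine ⟨fun hx => by_contra fun hxU => hx ⟨x, hxU, le_rfl⟩, ?_⟩
  rintro hx ⟨a, haU, hxa⟩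
  exact haU (hU hxa hx)

lemma mem_starC_starC_iff {V : Set P} {t : P} :
    t ∈ starC (starC V) ↔ ∀ s, t ≤ s → s ∈ dwC V :=
  ⟨fun h s hts => by_contra fun hs => h ⟨s, hs, hts⟩, fun h ⟨s, hs, hts⟩ => hs (h s hts)⟩

lemma subset_starC_starC {V : Set P} (hV : IsUpperSet V) : V ⊆ starC (starC V) :=
  fun _ ht => mem_starC_starC_iff.2 fun _ hts => subset_dwC V (hV hts ht)

end Poset

namespace Ultrafilter

variable {α : Type*}

theorem isOpen_singleton_iff {u : Ultrafilter α} :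
    IsOpen ({u} : Set (Ultrafilter α)) ↔ ∃ a, u = pure a := by
  refine ⟨fun h => ?_, ?_⟩
  · obtain ⟨a, ha⟩ := denseRange_pure.exists_mem_open h (singleton_nonempty u)
    exact ⟨a, (mem_singleton_iff.1 ha).symm⟩
  · rintro ⟨a, rfl⟩
    convert ultrafilter_isOpen_basic ({a} : Set α)
    ext v
    refine ⟨fun hv => hv ▸ mem_pure.2 rfl, fun hv => ?_⟩
    obtain ⟨b, hb, rfl⟩ := eq_pure_of_finite_mem (finite_singleton a) hv
    exact congrArg pure hb

theorem closure_eq_of_isOpen {O : Set (Ultrafilter α)} (hO : IsOpen O) :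
    closure O = {u | {a | pure a ∈ O} ∈ u} := by
  refine (closure_minimal (fun u hu => ?_) (ultrafilter_isClosed_basic _)).antisymm fun u hu => ?_
  · obtain ⟨_, ⟨s, rfl⟩, hus, hsO⟩ := ultrafilterBasis_is_basis.isOpen_iff.1 hO u hu
    exact mem_of_superset hus fun a ha => hsO (mem_pure.2 ha)
  · refine mem_closure_iff.2 fun W hW huW => ?_
    obtain ⟨_, ⟨s, rfl⟩, hus, hsW⟩ := ultrafilterBasis_is_basis.isOpen_iff.1 hW u huW
    obtain ⟨a, haO, has⟩ := Ultrafilter.nonempty_of_mem (inter_mem hu hus)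
    exact ⟨pure a, hsW (mem_pure.2 has), haO⟩

instance : ExtremallyDisconnected (Ultrafilter α) where
  open_closure _ hO := closure_eq_of_isOpen hO ▸ ultrafilter_isOpen_basic _

theorem exists_ne_pure_extend_eq {γ : Type*} [TopologicalSpace γ] [T2Space γ] [CompactSpace γ]
    {f : α → γ} {g : ℕ → α} (hg : Injective g) {c : γ} (hfg : Tendsto (f ∘ g) atTop (𝓝 c)) :
    ∃ u : Ultrafilter α, (∀ a, u ≠ pure a) ∧ Ultrafilter.extend f u = c := by
  refine ⟨(hyperfilter ℕ).map g, fun a ha => ?_, ultrafilter_extend_eq_iff.2 ?_⟩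
  · have : g ⁻¹' {a} ∈ hyperfilter ℕ := mem_map.1 (ha ▸ mem_pure.2 rfl)
    exact notMem_hyperfilter_of_finite ((finite_singleton a).preimage hg.injOn) this
  · rw [coe_map, coe_map, Filter.map_map]
    exact (map_mono hyperfilter_le_cofinite).trans (Nat.cofinite_eq_atTop ▸ hfg)

end Ultrafilter

namespace OnePoint

variable {Z : Type*} [TopologicalSpace Z] [DiscreteTopology Z]

lemma isOpen_of_infty_notMem {T : Set (OnePoint Z)} (h : ∞ ∉ T) : IsOpen T :=
  (isOpen_iff_of_notMem h).2 (isOpen_discrete _)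

lemma isClosed_of_infty_mem {T : Set (OnePoint Z)} (h : ∞ ∈ T) : IsClosed T :=
  (isClosed_iff_of_mem h).2 (isClosed_discrete _)

lemma isClopen_singleton_of_ne_infty {b : OnePoint Z} (hb : b ≠ ∞) : IsClopen {b} :=
  ⟨isClosed_singleton, isOpen_of_infty_notMem fun h => hb (mem_singleton_iff.1 h).symm⟩

lemma tendsto_coe_atTop_infty : Tendsto ((↑) : ℕ → OnePoint ℕ) atTop (𝓝 ∞) := by
  simpa [coclosedCompact_eq_cocompact, cocompact_eq_cofinite, Nat.cofinite_eq_atTop] using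
    tendsto_coe_infty (X := ℕ)

end OnePoint

namespace NonHausdorffExample

noncomputable section

/-- `proj u = n` when the row `{n} × ℕ` belongs to `u`, and `proj u = ∞` when no row does. -/
def proj : Ultrafilter (ℕ × ℕ) → OnePoint ℕ :=
  Ultrafilter.extend fun x => (x.1 : OnePoint ℕ)

lemma continuous_proj : Continuous proj := continuous_ultrafilter_extend _

lemma exists_ne_pure_proj_eq (a : OnePoint ℕ) : ∃ u, (∀ x, u ≠ pure x) ∧ proj u = a := by
  induction a using OnePoint.rec with
  | infty =>
    exact Ultrafilter.exists_ne_pure_extend_eq (g := fun k => (k, 0))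
      (fun _ _ h => (Prod.ext_iff.1 h).1) tendsto_coe_atTop_infty
  | coe n =>
    exact Ultrafilter.exists_ne_pure_extend_eq (g := fun k => (n, k))
      (fun _ _ h => (Prod.ext_iff.1 h).2) tendsto_const_nhds

/-- The space: the one-point compactification `ℕ ∪ {∞}` at the bottom, `β(ℕ × ℕ)` above it. -/
abbrev E : Type := OnePoint ℕ ⊕ Ultrafilter (ℕ × ℕ)

def base : E → OnePoint ℕ := Sum.elim id proj

@[simp] lemma base_inl (a : OnePoint ℕ) : base (.inl a) = a := rfl

/-- `foot y` is the largest point of the bottom layer below `y`. -/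
def foot (y : E) : E := .inl (base y)

/-- In the bottom layer the points of `ℕ` form an antichain below `∞`; an ultrafilter `u` lies
exactly above `foot u`. -/
instance : PartialOrder E where
  le x y := match x with
    | .inl a => base y = a ∨ base y = ∞
    | .inr u => y = .inr u
  le_refl
    | .inl _ => .inl rfl
    | .inr _ => rfl
  le_trans
    | .inl _, .inl _, _, hab, hbc => by
      rw [base_inl] at hab
      rcases hab with rfl | rfl <;> simp_all
    | .inl _, .inr _, _, hab, rfl => hab
    | .inr _, _, _, rfl, rfl => rfl
  le_antisymm
    | .inl _, .inl _, hab, hba => by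
      rw [base_inl] at hab hba
      rcases hab with rfl | rfl <;> simp_all
    | .inl _, .inr _, _, hba => nomatch hba
    | .inr _, _, rfl, _ => rfl

lemma inl_le_iff {a : OnePoint ℕ} {y : E} : (.inl a : E) ≤ y ↔ base y = a ∨ base y = ∞ := Iff.rfl

lemma inr_le_iff {u : Ultrafilter (ℕ × ℕ)} {y : E} : (.inr u : E) ≤ y ↔ y = .inr u := Iff.rfl

lemma foot_le (y : E) : foot y ≤ y := .inl rfl

lemma foot_mono {x y : E} (h : x ≤ y) : foot x ≤ foot y := by
  cases x with
  | inl a => exact h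
  | inr u => exact (inr_le_iff.1 h) ▸ le_rfl

lemma eq_or_mem_range_inl_of_le {x y : E} (h : x ≤ y) : x = y ∨ x ∈ range Sum.inl := by
  cases x with
  | inl a => exact .inr ⟨a, rfl⟩
  | inr u => exact .inl (inr_le_iff.1 h).symm

lemma inl_le_inl_infty (a : OnePoint ℕ) : (.inl a : E) ≤ .inl ∞ := .inr rfl

lemma eq_of_le_inl {x : E} {b : OnePoint ℕ} (h : x ≤ .inl b) (hb : b ≠ ∞) : x = .inl b := by
  cases x with
  | inl a => exact congrArg _ (h.resolve_right hb).symm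
  | inr u => exact (inr_le_iff.1 h).symm

lemma continuous_base : Continuous base := continuous_id.sumElim continuous_proj

lemma continuous_foot : Continuous foot := continuous_inl.comp continuous_base

lemma image_foot (W : Set E) : foot '' W = Sum.inl '' (base '' W) := by
  rw [image_image]
  rfl

lemma tendsto_inl_coe_atTop : Tendsto (fun k : ℕ => (Sum.inl k : E)) atTop (𝓝 (.inl ∞)) :=
  (continuous_inl.tendsto _).comp tendsto_coe_atTop_infty

lemma isClopen_image_inl {T : Set (OnePoint ℕ)} (hT : IsClopen T) :
    IsClopen (Sum.inl '' T : Set E) :=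
  ⟨IsClosedEmbedding.inl.isClosedMap _ hT.isClosed, isOpenMap_inl _ hT.isOpen⟩

lemma isClopen_singleton_inr {u : Ultrafilter (ℕ × ℕ)} (hu : IsOpen {u}) :
    IsClopen {(.inr u : E)} :=
  ⟨isClosed_singleton, by simpa using isOpenMap_inr (X := OnePoint ℕ) _ hu⟩

lemma dwC_eq_union_dwC_image_foot (W : Set E) : dwC W = W ∪ dwC (foot '' W) := by
  ext x
  constructor
  · rintro ⟨y, hy, hxy⟩
    rcases eq_or_mem_range_inl_of_le hxy with rfl | ⟨a, rfl⟩
    · exact .inl hy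
    · exact .inr ⟨foot y, mem_image_of_mem foot hy, hxy⟩
  · rintro (hx | ⟨_, ⟨y, hy, rfl⟩, hx⟩)
    · exact subset_dwC W hx
    · exact ⟨y, hy, hx.trans (foot_le y)⟩

lemma dwC_image_inl_of_infty_mem {T : Set (OnePoint ℕ)} (h : ∞ ∈ T) :
    dwC (Sum.inl '' T : Set E) = range Sum.inl := by
  refine Subset.antisymm ?_ ?_
  · rintro x ⟨_, ⟨a, -, rfl⟩, hxa⟩
    rcases eq_or_mem_range_inl_of_le hxa with rfl | hx
    · exact ⟨a, rfl⟩
    · exact hx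
  · rintro _ ⟨a, rfl⟩
    exact ⟨.inl ∞, mem_image_of_mem _ h, inl_le_inl_infty a⟩

lemma dwC_image_inl_of_infty_notMem {T : Set (OnePoint ℕ)} (h : ∞ ∉ T) :
    dwC (Sum.inl '' T : Set E) = Sum.inl '' T := by
  refine Subset.antisymm ?_ (subset_dwC _)
  rintro x ⟨_, ⟨b, hb, rfl⟩, hxb⟩
  exact eq_of_le_inl hxb (ne_of_mem_of_not_mem hb h) ▸ mem_image_of_mem _ hb

lemma isClopen_dwC_image_inl {T : Set (OnePoint ℕ)} (hT : IsClosed T) :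
    IsClopen (dwC (Sum.inl '' T : Set E)) := by
  by_cases h : ∞ ∈ T
  · rw [dwC_image_inl_of_infty_mem h]
    exact isClopen_range_inl
  · rw [dwC_image_inl_of_infty_notMem h]
    exact isClopen_image_inl ⟨hT, isOpen_of_infty_notMem h⟩

lemma isClopen_dwC {W : Set E} (hW : IsClopen W) : IsClopen (dwC W) := by
  rw [dwC_eq_union_dwC_image_foot, image_foot]
  exact hW.union (isClopen_dwC_image_inl (hW.isClosed.isCompact.image continuous_base).isClosed)

lemma inl_mem_localicPts (a : OnePoint ℕ) : (.inl a : E) ∈ localicPts E := by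
  show IsClopen (dwC {(.inl a : E)})
  rw [← image_singleton]
  exact isClopen_dwC_image_inl isClosed_singleton

lemma inr_mem_localicPts_iff {u : Ultrafilter (ℕ × ℕ)} :
    (.inr u : E) ∈ localicPts E ↔ IsOpen ({u} : Set (Ultrafilter (ℕ × ℕ))) := by
  refine ⟨fun h => ?_, fun hu => ?_⟩
  · have : Sum.inr ⁻¹' dwC {(.inr u : E)} = {u} := by
      refine Subset.antisymm ?_ fun _ hv => subset_dwC _ (congrArg Sum.inr hv)
      rintro v ⟨_, rfl, hvu⟩
      exact Sum.inr_injective (inr_le_iff.1 hvu).symm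
    exact this ▸ h.isOpen.preimage continuous_inr
  · show IsClopen (dwC {(.inr u : E)})
    rw [dwC_eq_union_dwC_image_foot, image_foot, image_singleton]
    exact (isClopen_singleton_inr hu).union (isClopen_dwC_image_inl isClosed_singleton)

lemma foot_inr_mem {V : Set E} (hV : IsUpperSet V) (hmin : minOf V ⊆ localicPts E)
    {u : Ultrafilter (ℕ × ℕ)} (hu : .inr u ∈ V) (hu' : ¬IsOpen ({u} : Set (Ultrafilter (ℕ × ℕ)))) :
    foot (.inr u) ∈ V := by
  have : (.inr u : E) ∉ minOf V := fun h => hu' (inr_mem_localicPts_iff.1 (hmin h))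
  simp only [minOf, mem_ofPred_eq, not_and, not_forall] at this
  obtain ⟨z, hz, hzu, hne⟩ := this hu
  rcases eq_or_mem_range_inl_of_le hzu with h | ⟨a, rfl⟩
  · exact absurd h hne
  · exact hV (foot_mono hzu) hz

lemma starC_starC_subset {V : Set E} (hV : IsUpperSet V) (hmin : minOf V ⊆ localicPts E) :
    starC (starC V) ⊆ V := by
  have mem_of_mem_dwC : ∀ u, (.inr u : E) ∈ dwC V → .inr u ∈ V := by
    rintro u ⟨v, hv, huv⟩
    rwa [inr_le_iff.1 huv] at hv
  intro t ht
  rw [mem_starC_starC_iff] at ht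
  cases t with
  | inr u => exact mem_of_mem_dwC u (ht _ le_rfl)
  | inl a =>
    obtain ⟨u, hu, rfl⟩ := exists_ne_pure_proj_eq a
    exact foot_inr_mem hV hmin (mem_of_mem_dwC u (ht _ (.inl rfl)))
      (mt Ultrafilter.isOpen_singleton_iff.1 (not_exists.2 hu))

lemma foot_preimage_mem_clopSUp {U : Set E} (hU : IsClopen U) (hU' : IsUpperSet U) :
    foot ⁻¹' U ∈ ClopSUp E := by
  refine ⟨hU.preimage continuous_foot, (hU.preimage continuous_foot).isClosed,
    fun x y hxy hx => hU' (foot_mono hxy) hx, fun x hx => ?_⟩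
  rw [← hx.2 (foot x) hx.1 (foot_le x)]
  exact inl_mem_localicPts _

lemma singleton_inr_mem_clopSUp {u : Ultrafilter (ℕ × ℕ)} (hu : IsOpen {u}) :
    {(.inr u : E)} ∈ ClopSUp E := by
  refine ⟨isClopen_singleton_inr hu, (isClopen_singleton_inr hu).isClosed,
    fun x y hxy hx => ?_, fun y hy => ?_⟩
  · rw [mem_singleton_iff.1 hx, inr_le_iff] at hxy
    exact hxy
  · rw [mem_singleton_iff.1 hy.1]
    exact inr_mem_localicPts_iff.2 hu

/-- The bottom layer of `U` lies in the clopen Scott upset `foot ⁻¹' U ⊆ U`, and the principal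
ultrafilters, which are dense, are isolated and hence localic. -/
lemma subset_closure_coreC {U : Set E} (hU : IsClopen U) (hU' : IsUpperSet U) :
    U ⊆ closure (coreC U) := by
  intro y hy
  cases y with
  | inl a =>
    exact subset_closure ⟨foot ⁻¹' U, ⟨foot_preimage_mem_clopSUp hU hU',
      fun z hz => hU' (foot_le z) hz⟩, hy⟩
  | inr u =>
    refine mem_closure_iff.2 fun O hO huO => ?_
    obtain ⟨x, hxO, hxU⟩ := denseRange_pure.exists_mem_open
      ((hO.inter hU.isOpen).preimage continuous_inr) ⟨u, huO, hy⟩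
    exact ⟨.inr (pure x), hxO, {.inr (pure x)}, ⟨singleton_inr_mem_clopSUp
      (Ultrafilter.isOpen_singleton_iff.2 ⟨x, rfl⟩), singleton_subset_iff.2 hxU⟩, rfl⟩

lemma dOp_eq_self {U : Set E} (hU : IsClopen U) (hU' : IsUpperSet U) : dOp U = U := by
  refine (closure_minimal ?_ hU.isClosed).antisymm ((subset_closure_coreC hU hU').trans
    (closure_mono ?_))
  · rintro _ ⟨_, ⟨V, hV, hVU, rfl⟩, hy⟩
    exact hVU (starC_starC_subset hV.2.2.1 hV.2.2.2 hy)
  · rintro y ⟨V, ⟨hV, hVU⟩, hy⟩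
    exact ⟨_, ⟨V, hV, hVU, rfl⟩, subset_starC_starC hV.2.2.1 hy⟩

lemma isScottUp_inter {U V : Set E} (hU : U ∈ ClopSUp E) (hV : V ∈ ClopSUp E) :
    IsScottUp (U ∩ V) := by
  refine ⟨hU.2.1.inter hV.2.1, hU.2.2.1.inter hV.2.2.1, fun x hx => ?_⟩
  by_contra hxY
  cases x with
  | inl a => exact hxY (inl_mem_localicPts a)
  | inr u =>
    have hu : ¬IsOpen ({u} : Set (Ultrafilter (ℕ × ℕ))) := mt inr_mem_localicPts_iff.2 hxY
    have hfoot : foot (.inr u) ∈ U ∩ V :=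
      ⟨foot_inr_mem hU.2.2.1 hU.2.2.2 hx.1.1 hu, foot_inr_mem hV.2.2.1 hV.2.2.2 hx.1.2 hu⟩
    exact Sum.inl_ne_inr (hx.2 _ hfoot (foot_le _))

lemma exists_isClopen_isUpperSet_of_not_le {x y : E} (h : ¬x ≤ y) :
    ∃ U, IsClopen U ∧ IsUpperSet U ∧ x ∈ U ∧ y ∉ U := by
  cases x with
  | inl a =>
    rw [inl_le_iff, not_or] at h
    refine ⟨base ⁻¹' {base y}ᶜ, (isClopen_singleton_of_ne_infty h.2).compl.preimage
      continuous_base, fun z w hzw hz => ?_, Ne.symm h.1, fun hy => hy rfl⟩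
    obtain hw | hw : base w = base z ∨ base w = ∞ := foot_mono hzw
    · rwa [mem_preimage, hw]
    · rw [mem_preimage, hw]
      exact Ne.symm h.2
  | inr u =>
    obtain ⟨W, hW, huW, hyW⟩ :=
      exists_isClopen_of_totally_separated fun h' : .inr u = y => h (h' ▸ le_rfl)
    refine ⟨W ∩ range Sum.inr, hW.inter isClopen_range_inr, ?_, ⟨huW, u, rfl⟩,
      fun hy => hyW hy.1⟩
    rintro z w hzw ⟨hz, v, rfl⟩
    rw [inr_le_iff.1 hzw]
    exact ⟨hz, v, rfl⟩

lemma preimage_inl_closure {U : Set E} (hU : IsUpperSet U) :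
    Sum.inl ⁻¹' closure U = Sum.inl ⁻¹' U := by
  rw [isOpenMap_inl.preimage_closure_eq_closure_preimage continuous_inl]
  refine IsClosed.closure_eq ?_
  by_cases h : ∞ ∈ Sum.inl ⁻¹' U
  · exact isClosed_of_infty_mem h
  · convert isClosed_empty
    exact eq_empty_of_forall_notMem fun a ha => h (hU (inl_le_inl_infty a) ha)

lemma isOpen_closure_of_isUpperSet {U : Set E} (hU : IsOpen U) (hU' : IsUpperSet U) :
    IsOpen (closure U) := by
  refine isOpen_sum_iff.2 ⟨?_, ?_⟩
  · rw [preimage_inl_closure hU']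
    exact hU.preimage continuous_inl
  · rw [isOpenMap_inr.preimage_closure_eq_closure_preimage continuous_inr]
    exact ExtremallyDisconnected.open_closure _ (hU.preimage continuous_inr)

lemma isUpperSet_closure {U : Set E} (hU : IsUpperSet U) : IsUpperSet (closure U) := by
  intro x y hxy hx
  rcases eq_or_mem_range_inl_of_le hxy with rfl | ⟨a, rfl⟩
  · exact hx
  · have : a ∈ Sum.inl ⁻¹' U := preimage_inl_closure hU ▸ hx
    exact subset_closure (hU hxy this)

lemma isArithmeticLSpace : IsArithmeticLSpace E :=
  ⟨⟨⟨⟨inferInstance, fun _ _ => exists_isClopen_isUpperSet_of_not_le⟩,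
    fun _ hU hU' => ⟨isOpen_closure_of_isUpperSet hU hU', isUpperSet_closure hU'⟩⟩,
    fun _ hU hU' => subset_closure_coreC hU hU'⟩, fun _ _ => isScottUp_inter⟩

lemma isNuclearSub_univ : IsNuclearSub (univ : Set E) :=
  ⟨isClosed_univ, fun U hU => by rw [inter_univ]; exact isClopen_dwC hU⟩

lemma jN_univ {U : Set E} (hU : IsClopen U) (hU' : IsUpperSet U) : jN univ U = dOp U := by
  rw [jN, ← compl_eq_univ_sdiff, compl_dwC_compl hU', dOp_eq_self hU hU']

lemma inl_coe_mem_minOf (n : ℕ) : (.inl n : E) ∈ minOf (univ ∩ localicPts E) :=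
  ⟨⟨trivial, inl_mem_localicPts _⟩, fun _ _ hz => eq_of_le_inl hz (coe_ne_infty n)⟩

lemma tendsto_traceTop {S : Set E} (hS : ∀ k : ℕ, (.inl k : E) ∈ S) {a : OnePoint ℕ}
    (ha : .inl a ∈ S) :
    Tendsto (fun k : ℕ => (⟨.inl k, hS k⟩ : S)) atTop (@nhds S (traceTop S) ⟨.inl a, ha⟩) := by
  rw [traceTop, TopologicalSpace.tendsto_nhds_generateFrom_iff]
  rintro _ ⟨U, hU, hU', rfl⟩ haU
  exact tendsto_inl_coe_atTop.eventually (hU.isOpen.mem_nhds (hU' (inl_le_inl_infty a) haU))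

lemma not_t2Space_traceTop : ¬@T2Space _ (traceTop (minOf (univ ∩ localicPts E))) := by
  intro hT2
  have h := @tendsto_nhds_unique _ _ (traceTop _) hT2 _ _ _ _ _
    (tendsto_traceTop inl_coe_mem_minOf (inl_coe_mem_minOf 0))
    (tendsto_traceTop inl_coe_mem_minOf (inl_coe_mem_minOf 1))
  simp at h

end

end NonHausdorffExample

/-- There exists an arithmetic L-space `X` such that `min Y_d`
(where `Y_d = N_d ∩ Y` for the nuclear subset `N_d` whose nucleus `j_N` is the
`d`-nucleus), topologized so that its open sets are exactly the traces of clopen upsets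
of `X`, is not Hausdorff. -/
theorem statement19 :
    ∃ (X : Type) (t : TopologicalSpace X) (p : PartialOrder X) (N : Set X),
      letI := t
      letI := p
      IsArithmeticLSpace X ∧ IsNuclearSub N ∧
        (∀ U : Set X, IsClopen U → IsUpperSet U → jN N U = dOp U) ∧
        ¬@T2Space _ (traceTop (minOf (N ∩ localicPts X))) :=
  ⟨NonHausdorffExample.E, inferInstance, inferInstance, univ,
    NonHausdorffExample.isArithmeticLSpace, NonHausdorffExample.isNuclearSub_univ,
    fun _ => NonHausdorffExample.jN_univ, NonHausdorffExample.not_t2Space_traceTop⟩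
end
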